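/- Assume ‖a‖² ≥ 2 and that the good set G is nonempty. For each m ∈ G let x_m be the unique positive solution of R_{h_m}(x) = x·R'_{h_m}(x) (where R'_{h_m} denotes the derivative of P ↦ R_{h_m}(P)), and let λ_m > 0 be the unique value with P^KKT_{h_m}(λ_m) = x_m. Set λ_o = min_{m∈G} λ_m and P̄_o = Σ_{m∈G} f_m·P^KKT_{h_m}(λ_o). If P̄ > P̄_o, then every optimal solution (P*_1,…,P*_M) of DP1^(s) has active set exactly equal to the good set: {m : P*_m > 0} = G. -/

import Mathlib

/-!
Each rate `R_h` is increasing and concave on `[0, ∞)` when `ε(h) < ‖h‖²`, and negative there when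
`‖h‖² ≤ ε(h)` (as `‖a‖² > 1`); its slope at `P^KKT_h(λ)` is `λ / (2 log 2)`. Hence an optimal
allocation puts no power outside `G` and spends the whole budget on `G`. If some `g ∈ G` got no power,
then, since `P̄ > P̄₀`, the channels of `G` running above their thresholds `P^KKT_{h_m}(λ₀)` hold more
than `f_g x_g` of excess budget. Moving `f_g x_g` of it to `g` loses less than `λ₀ / (2 log 2)` per unit
and gains `R(x_g) = x_g R'(x_g) = x_g λ_g / (2 log 2) ≥ x_g λ₀ / (2 log 2)`: a strict improvement.
-/

open scoped BigOperators Classical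
open Finset

noncomputable section

/-- Euclidean inner product on `Fin L → ℝ`. -/
def ip {L : ℕ} (x y : Fin L → ℝ) : ℝ := ∑ i, x i * y i

/-- Squared Euclidean norm on `Fin L → ℝ`. -/
def nsq {L : ℕ} (x : Fin L → ℝ) : ℝ := ∑ i, (x i) ^ 2

/-- ε(h) = ‖h‖²‖a‖² − ⟨h,a⟩². -/
def eps {L : ℕ} (a h : Fin L → ℝ) : ℝ := nsq h * nsq a - (ip h a) ^ 2

/-- Symmetric-policy computation rate R_h(P). -/
def Rsym {L : ℕ} (a h : Fin L → ℝ) (P : ℝ) : ℝ :=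
  (1 / 2) * Real.logb 2 ((1 + P * nsq h) / (nsq a + P * eps a h))

/-- The vector √p∘h with entries √(p_l)·h_l. -/
def sqp {L : ℕ} (p h : Fin L → ℝ) : Fin L → ℝ := fun l => Real.sqrt (p l) * h l

/-- Asymmetric-policy computation rate R(h,p). -/
def Rasym {L : ℕ} (a h p : Fin L → ℝ) : ℝ :=
  (1 / 2) * Real.logb 2 ((1 + nsq (sqp p h)) /
    (nsq a + (nsq (sqp p h) * nsq a - (ip (sqp p h) a) ^ 2)))

/-- The KKT water-filling-type solution P^KKT_h(λ). -/
def PKKT {L : ℕ} (a h : Fin L → ℝ) (lam : ℝ) : ℝ :=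
  if ∃ t : ℝ, h = t • a then 1 / lam - 1 / nsq h
  else (-(2 * nsq h * nsq a - (ip h a) ^ 2) +
      Real.sqrt ((2 * nsq h * nsq a - (ip h a) ^ 2) ^ 2 -
        4 * (nsq h * eps a h) * (nsq a - (ip h a) ^ 2 / lam))) /
    (2 * (nsq h * eps a h))

def rate (A H E P : ℝ) : ℝ := 1 / 2 * Real.logb 2 ((1 + P * H) / (A + P * E))

def rateDeriv (A H E P : ℝ) : ℝ := (H * A - E) / (2 * Real.log 2 * ((1 + P * H) * (A + P * E)))

section Rate

variable {A H E p q : ℝ}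

theorem hasDerivAt_rate (hu : 1 + p * H ≠ 0) (hv : A + p * E ≠ 0) :
    HasDerivAt (rate A H E) (rateDeriv A H E p) p := by
  have hu' : HasDerivAt (fun P => 1 + P * H) H p := by
    simpa using (hasDerivAt_mul_const H).const_add 1
  have hv' : HasDerivAt (fun P => A + P * E) E p := by
    simpa using (hasDerivAt_mul_const E).const_add A
  have : HasDerivAt (rate A H E) _ p :=
    (((hu'.div hv' hv).log (div_ne_zero hu hv)).div_const (Real.log 2)).const_mul (1 / 2)
  refine this.congr_deriv ?_
  simp only [rateDeriv, Pi.div_apply]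
  field_simp
  ring

theorem rate_neg_of_lt (hu : 0 < 1 + p * H) (hlt : 1 + p * H < A + p * E) : rate A H E p < 0 := by
  have := Real.logb_neg one_lt_two (div_pos hu (hu.trans hlt)) ((div_lt_one (hu.trans hlt)).2 hlt)
  unfold rate; linarith

theorem rate_strictMonoOn (hA : 0 < A) (hH : 0 ≤ H) (hE : 0 ≤ E) (hEA : E < H * A) :
    StrictMonoOn (rate A H E) (Set.Ici 0) := by
  intro p (hp : 0 ≤ p) q (hq : 0 ≤ q) hpq
  have hratio : (1 + p * H) / (A + p * E) < (1 + q * H) / (A + q * E) := by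
    rw [div_lt_div_iff₀ (by positivity) (by positivity)]
    nlinarith [mul_pos (sub_pos.2 hpq) (sub_pos.2 hEA)]
  have := Real.logb_lt_logb one_lt_two (by positivity) hratio
  unfold rate; linarith

theorem rate_sub_le (hA : 0 < A) (hH : 0 ≤ H) (hE : 0 ≤ E) (hEA : E ≤ H * A)
    (hp : 0 ≤ p) (hq : 0 ≤ q) :
    rate A H E q - rate A H E p ≤ rateDeriv A H E p * (q - p) := by
  have hup : 0 < 1 + p * H := by positivity
  have hvp : 0 < A + p * E := by positivity
  have hvq : 0 < A + q * E := by positivity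
  have hl2 : 0 < Real.log 2 := Real.log_pos one_lt_two
  set ρ := (1 + q * H) / (A + q * E) / ((1 + p * H) / (A + p * E)) with hρ
  have hρpos : 0 < ρ := by positivity
  have hdiff : rate A H E q - rate A H E p = Real.log ρ / (2 * Real.log 2) := by
    rw [hρ, Real.log_div (by positivity) (by positivity)]
    unfold rate Real.logb; ring
  -- `log ρ ≤ ρ - 1`, and `ρ - 1 = (q - p) (H A - E) / ((A + q E)(1 + p H))`
  have hρ1 : ρ - 1 ≤ (q - p) * (H * A - E) / ((A + p * E) * (1 + p * H)) := by
    have : ρ - 1 = (q - p) * (H * A - E) / ((A + q * E) * (1 + p * H)) := by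
      rw [hρ]; field_simp; ring
    rw [this, div_le_div_iff₀ (by positivity) (by positivity)]
    nlinarith [mul_nonneg (mul_nonneg (mul_nonneg (sq_nonneg (q - p)) (sub_nonneg.2 hEA)) hE)
      hup.le]
  rw [hdiff, div_le_iff₀ (by positivity)]
  calc Real.log ρ ≤ ρ - 1 := Real.log_le_sub_one_of_pos hρpos
    _ ≤ _ := hρ1
    _ = rateDeriv A H E p * (q - p) * (2 * Real.log 2) := by unfold rateDeriv; field_simp

theorem rateDeriv_strictAntiOn (hA : 0 < A) (hH : 0 ≤ H) (hE : 0 ≤ E) (hEA : E < H * A) :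
    StrictAntiOn (rateDeriv A H E) (Set.Ici 0) := by
  intro p (hp : 0 ≤ p) q (hq : 0 ≤ q) hpq
  have hH' : 0 < H := pos_of_mul_pos_left (hE.trans_lt hEA) hA.le
  have hl2 : 0 < Real.log 2 := Real.log_pos one_lt_two
  apply div_lt_div_of_pos_left (by linarith) (by positivity)
  have : (1 + p * H) * (A + p * E) < (1 + q * H) * (A + q * E) := by
    nlinarith [mul_pos (sub_pos.2 hpq) (mul_pos hH' hA),
      mul_nonneg (mul_nonneg (sub_pos.2 hpq).le hE) hp,
      mul_nonneg (mul_nonneg (mul_nonneg (sub_pos.2 hpq).le (add_nonneg hp hq)) hH) hE]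
  gcongr

end Rate

section Vectors

variable {L : ℕ} {a h : Fin L → ℝ}

theorem nsq_nonneg (x : Fin L → ℝ) : 0 ≤ nsq x :=
  Finset.sum_nonneg fun i _ => sq_nonneg (x i)

theorem ip_sq_eq (a h : Fin L → ℝ) : ip h a ^ 2 = nsq h * nsq a - eps a h := by
  unfold eps; ring

theorem eps_nonneg : 0 ≤ eps a h := by
  have := Finset.sum_mul_sq_le_sq_mul_sq Finset.univ h a
  unfold eps nsq ip
  linarith

theorem eps_smul_self (t : ℝ) : eps a (t • a) = 0 := by
  have hn : nsq (t • a) = t ^ 2 * nsq a := by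
    simp only [nsq, Finset.mul_sum, Pi.smul_apply, smul_eq_mul, mul_pow]
  have hi : ip (t • a) a = t * nsq a := by
    simp only [ip, nsq, Finset.mul_sum, Pi.smul_apply, smul_eq_mul]
    exact Finset.sum_congr rfl fun i _ => by ring
  rw [eps, hn, hi]; ring

theorem eps_pos (ha : 0 < nsq a) (hcol : ¬ ∃ t : ℝ, h = t • a) : 0 < eps a h := by
  refine eps_nonneg.lt_of_ne fun he => hcol ⟨ip h a / nsq a, ?_⟩
  set t := ip h a / nsq a
  -- `∑ (h i - t a i)² = ‖h‖² - 2 t ⟨h,a⟩ + t² ‖a‖² = ε(h) / ‖a‖²`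
  have hsum : ∑ i, (h i - t * a i) ^ 2 = 0 := by
    have : ∑ i, (h i - t * a i) ^ 2 = nsq h - 2 * t * ip h a + t ^ 2 * nsq a := by
      simp only [nsq, ip, Finset.mul_sum, ← Finset.sum_sub_distrib, ← Finset.sum_add_distrib]
      exact Finset.sum_congr rfl fun i _ => by ring
    rw [this, show t ^ 2 * nsq a = t * ip h a by simp only [t]; field_simp]
    have : t * ip h a = nsq h := by
      simp only [t]; field_simp; linarith [ip_sq_eq a h]
    linarith
  funext i
  have := (Finset.sum_eq_zero_iff_of_nonneg fun i _ => sq_nonneg (h i - t * a i)).1 hsum i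
    (Finset.mem_univ i)
  simp only [Pi.smul_apply, smul_eq_mul]
  nlinarith [pow_eq_zero_iff (n := 2) two_ne_zero |>.1 this]

end Vectors

section KKT

variable {L : ℕ} {a h : Fin L → ℝ} {lam : ℝ}

theorem PKKT_antitoneOn : AntitoneOn (PKKT a h) (Set.Ioi 0) := by
  intro μ (hμ : 0 < μ) ν _ hμν
  unfold PKKT
  split_ifs
  · linarith [one_div_le_one_div_of_le hμ hμν]
  · have hd : 0 ≤ nsq h * eps a h := mul_nonneg (nsq_nonneg h) eps_nonneg
    gcongr

/-- The KKT stationarity condition `R'_h(P) = λ / (2 log 2)` at `P = PKKT a h λ`, cleared of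
denominators. -/
theorem PKKT_root (ha : 0 < nsq a) (hh : 0 < nsq h) (hl : 0 < lam) (hP : 0 < PKKT a h lam) :
    (1 + PKKT a h lam * nsq h) * (nsq a + PKKT a h lam * eps a h) =
      (nsq h * nsq a - eps a h) / lam := by
  unfold PKKT at hP ⊢
  split_ifs at hP ⊢ with hcol
  · obtain ⟨t, rfl⟩ := hcol
    rw [eps_smul_self]
    field_simp
    ring
  · have hE := eps_pos ha hcol
    set b := 2 * nsq h * nsq a - ip h a ^ 2
    set d := nsq h * eps a h
    set c := nsq a - ip h a ^ 2 / lam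
    have hb : 0 < b := by simp only [b]; nlinarith [ip_sq_eq a h]
    have hd : 0 < d := mul_pos hh hE
    -- a negative discriminant would make the square root vanish and `PKKT a h lam` negative
    have hdisc : 0 ≤ discrim d b c := by
      by_contra! hneg
      rw [Real.sqrt_eq_zero_of_nonpos (show b ^ 2 - 4 * d * c ≤ 0 from hneg.le)] at hP
      have : (-b + 0) / (2 * d) < 0 := div_neg_of_neg_of_pos (by linarith) (by positivity)
      linarith
    set P := (-b + Real.sqrt (b ^ 2 - 4 * d * c)) / (2 * d)
    have hroot : d * (P * P) + b * P + c = 0 :=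
      (quadratic_eq_zero_iff hd.ne' (Real.mul_self_sqrt hdisc).symm P).2 (Or.inl rfl)
    simp only [b, c, d, ip_sq_eq a h] at hroot ⊢
    field_simp at hroot ⊢
    linear_combination hroot

theorem rateDeriv_PKKT (ha : 0 < nsq a) (hh : 0 < nsq h) (hl : 0 < lam) (hP : 0 < PKKT a h lam) :
    rateDeriv (nsq a) (nsq h) (eps a h) (PKKT a h lam) = lam / (2 * Real.log 2) := by
  have hroot := PKKT_root ha hh hl hP
  have hl2 : 0 < Real.log 2 := Real.log_pos one_lt_two
  have hc : 0 < nsq h * nsq a - eps a h := by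
    refine (div_pos_iff_of_pos_right hl).1 ?_
    rw [← hroot]; have := eps_nonneg (a := a) (h := h); positivity
  rw [rateDeriv, hroot]
  field_simp

end KKT

section Channel

variable {L : ℕ} {a h : Fin L → ℝ} {lam p q : ℝ}

theorem Rsym_eq_rate : Rsym a h = rate (nsq a) (nsq h) (eps a h) := rfl

theorem Rsym_strictMonoOn (ha : 0 < nsq a) (hgood : eps a h < nsq h * nsq a) :
    StrictMonoOn (Rsym a h) (Set.Ici 0) :=
  rate_strictMonoOn ha (nsq_nonneg h) eps_nonneg hgood

theorem Rsym_zero_neg (ha : 1 < nsq a) : Rsym a h 0 < 0 :=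
  rate_neg_of_lt (by simp) (by simpa using ha)

theorem Rsym_neg (ha : 1 < nsq a) (hbad : nsq h ≤ eps a h) (hp : 0 ≤ p) : Rsym a h p < 0 :=
  rate_neg_of_lt (by have := nsq_nonneg h; positivity) (by nlinarith)

theorem deriv_Rsym_PKKT (ha : 0 < nsq a) (hh : 0 < nsq h) (hl : 0 < lam)
    (hP : 0 < PKKT a h lam) : deriv (Rsym a h) (PKKT a h lam) = lam / (2 * Real.log 2) := by
  have hd := hasDerivAt_rate (A := nsq a) (H := nsq h) (E := eps a h) (p := PKKT a h lam)
    (by positivity) (by have := eps_nonneg (a := a) (h := h); positivity)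
  rw [Rsym_eq_rate, hd.deriv, rateDeriv_PKKT ha hh hl hP]

theorem Rsym_sub_lt_of_PKKT_lt (ha : 0 < nsq a) (hgood : eps a h < nsq h * nsq a) (hl : 0 < lam)
    (hP : 0 < PKKT a h lam) (hp : PKKT a h lam < p) (hpq : p < q) :
    Rsym a h q - Rsym a h p < lam / (2 * Real.log 2) * (q - p) := by
  have hh : 0 < nsq h := pos_of_mul_pos_left (eps_nonneg.trans_lt hgood) ha.le
  have hp0 : 0 ≤ p := hP.le.trans hp.le
  calc Rsym a h q - Rsym a h p
      ≤ rateDeriv (nsq a) (nsq h) (eps a h) p * (q - p) :=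
        rate_sub_le ha hh.le eps_nonneg hgood.le hp0 (hp0.trans hpq.le)
    _ < rateDeriv (nsq a) (nsq h) (eps a h) (PKKT a h lam) * (q - p) := by
        refine mul_lt_mul_of_pos_right ?_ (by linarith)
        exact rateDeriv_strictAntiOn ha hh.le eps_nonneg hgood (Set.mem_Ici.2 hP.le)
          (Set.mem_Ici.2 hp0) hp
    _ = lam / (2 * Real.log 2) * (q - p) := by rw [rateDeriv_PKKT ha hh hl hP]

end Channel

theorem max_zero_sub_max_zero_lt {u v c : ℝ} (h : u - v < c) (hc : 0 < c) :
    max 0 u - max 0 v < c :=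
  (max_sub_max_le_max 0 u 0 v).trans_lt (max_lt (by simpa using hc) h)

section Allocation

variable {ι : Type*}

theorem sum_le_sum_filter_lt {s : Finset ι} {w u v : ι → ℝ} (hw : ∀ m ∈ s, 0 ≤ w m) :
    ∑ m ∈ s, w m * (u m - v m) ≤ ∑ m ∈ s with v m < u m, w m * (u m - v m) := by
  rw [← Finset.sum_filter_add_sum_filter_not s (fun m => v m < u m)]
  refine add_le_of_nonpos_right (Finset.sum_nonpos fun m hm => ?_)
  rw [Finset.mem_filter, not_lt] at hm
  exact mul_nonpos_of_nonneg_of_nonpos (hw m hm.1) (by linarith [hm.2])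

theorem lt_sum_erase_filter_lt [DecidableEq ι] {s : Finset ι} {w u v : ι → ℝ} {g : ι}
    (hg : g ∈ s) (hw : ∀ m ∈ s, 0 ≤ w m)
    (hlt : ∑ m ∈ s, w m * v m < ∑ m ∈ s, w m * u m) :
    w g * (v g - u g) < ∑ m ∈ s.erase g with v m < u m, w m * (u m - v m) := by
  have herase := Finset.sum_erase_add s (fun m => w m * (u m - v m)) hg
  have hsub : ∑ m ∈ s, w m * (u m - v m) = ∑ m ∈ s, w m * u m - ∑ m ∈ s, w m * v m := by
    simp only [mul_sub, Finset.sum_sub_distrib]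
  have := sum_le_sum_filter_lt (s := s.erase g) (u := u) (v := v) fun m hm =>
    hw m (Finset.mem_of_mem_erase hm)
  linarith

variable [Fintype ι]

theorem sum_sub_sum_eq_of_eq_off_insert [DecidableEq ι] (F : ι → ℝ → ℝ) {P Q : ι → ℝ}
    {g : ι} {T : Finset ι} (hgT : g ∉ T) (hQ : ∀ m, m ≠ g → m ∉ T → Q m = P m) :
    ∑ m, F m (Q m) - ∑ m, F m (P m) =
      (F g (Q g) - F g (P g)) + ∑ m ∈ T, (F m (Q m) - F m (P m)) := by
  rw [← Finset.sum_sub_distrib,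
    ← Finset.sum_insert (f := fun m => F m (Q m) - F m (P m)) hgT]
  refine (Finset.sum_subset (Finset.subset_univ _) fun m _ hm => ?_).symm
  rw [Finset.mem_insert, not_or] at hm
  rw [hQ m hm.1 hm.2, sub_self]

def totalRate (f : ι → ℝ) (r : ι → ℝ → ℝ) (P : ι → ℝ) : ℝ :=
  ∑ m, f m * max 0 (r m (P m))

def IsFeasible (f : ι → ℝ) (B : ℝ) (P : ι → ℝ) : Prop :=
  (∀ m, 0 ≤ P m) ∧ ∑ m, f m * P m ≤ B

def IsOptimal (f : ι → ℝ) (r : ι → ℝ → ℝ) (B : ℝ) (P : ι → ℝ) : Prop :=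
  IsFeasible f B P ∧ ∀ Q, IsFeasible f B Q → totalRate f r Q ≤ totalRate f r P

variable [DecidableEq ι] {f : ι → ℝ} {r : ι → ℝ → ℝ} {B : ℝ} {P : ι → ℝ}

theorem IsOptimal.exists_rate_pos (hf : ∀ m, 0 < f m) (hP : IsOptimal f r B P) {g : ι} {y : ℝ}
    (hy : 0 ≤ y) (hyB : f g * y ≤ B) (hr : 0 < r g y) : ∃ m, 0 < r m (P m) := by
  have hQ : IsFeasible f B (Pi.single g y) := by
    refine ⟨fun m => ?_, by simpa [Pi.single_apply] using hyB⟩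
    rcases eq_or_ne m g with rfl | hm
    · simpa using hy
    · simp [hm]
  have hpos : 0 < totalRate f r (Pi.single g y) :=
    Finset.sum_pos' (fun m _ => mul_nonneg (hf m).le (le_max_left _ _))
      ⟨g, Finset.mem_univ g, by simpa [hr.le] using mul_pos (hf g) hr⟩
  obtain ⟨m, -, hm⟩ := Finset.exists_lt_of_sum_lt (Finset.sum_const_zero.trans_lt
    (hpos.trans_le (hP.2 _ hQ)))
  exact ⟨m, (lt_max_iff.1 (pos_of_mul_pos_right hm (hf m).le)).resolve_left (lt_irrefl 0)⟩

theorem IsOptimal.rate_change_nonpos (hP : IsOptimal f r B P) {Q : ι → ℝ} {g : ι}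
    {T : Finset ι} (hgT : g ∉ T) (hQ : ∀ m, m ≠ g → m ∉ T → Q m = P m)
    (hQnn : ∀ m, 0 ≤ Q m)
    (hbudget : ∑ m, f m * P m + (f g * (Q g - P g) + ∑ m ∈ T, f m * (Q m - P m)) ≤ B) :
    f g * (max 0 (r g (Q g)) - max 0 (r g (P g))) +
      ∑ m ∈ T, f m * (max 0 (r m (Q m)) - max 0 (r m (P m))) ≤ 0 := by
  have hpower := sum_sub_sum_eq_of_eq_off_insert (fun m p => f m * p) hgT hQ
  have hrate := sum_sub_sum_eq_of_eq_off_insert (fun m p => f m * max 0 (r m p)) hgT hQ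
  simp only [← mul_sub] at hpower hrate
  have hle := hP.2 Q ⟨hQnn, by linarith⟩
  unfold totalRate at hle
  linarith

theorem IsOptimal.budget_eq (hf : ∀ m, 0 < f m) (hP : IsOptimal f r B P) {G : Finset ι}
    (hbad : ∀ m ∉ G, ∀ p, 0 ≤ p → r m p ≤ 0)
    (hmono : ∀ m ∈ G, StrictMonoOn (r m) (Set.Ici 0)) {g : ι} (hrg : 0 < r g (P g)) :
    (∀ m ∉ G, P m = 0) ∧ ∑ m ∈ G, f m * P m = B := by
  have hPnn := hP.1.1
  have hg : g ∈ G := by_contra fun hg => (hbad g hg _ (hPnn g)).not_gt hrg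
  have hsplit : ∑ m ∈ G, f m * P m + ∑ m ∈ Gᶜ, f m * P m = ∑ m, f m * P m :=
    Finset.sum_add_sum_compl G _
  have hterm : ∀ m ∈ Gᶜ, 0 ≤ f m * P m := fun m _ => mul_nonneg (hf m).le (hPnn m)
  -- otherwise shifting the slack budget and the power of the channels outside `G` to `g` helps
  have hGB : B ≤ ∑ m ∈ G, f m * P m := by
    by_contra! hlt
    set δ := (B - ∑ m ∈ G, f m * P m) / f g
    have hδ : 0 < δ := div_pos (by linarith) (hf g)
    have hgδ : f g * δ = B - ∑ m ∈ G, f m * P m := mul_div_cancel₀ _ (hf g).ne'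
    set Q : ι → ℝ := fun m => if m = g then P g + δ else if m ∈ G then P m else 0
    have hQ : ∀ m, m ≠ g → m ∉ Gᶜ → Q m = P m := fun m hmg hm => by
      simp [Q, hmg, Finset.notMem_compl.1 hm]
    have hQc : ∀ m ∈ Gᶜ, Q m = 0 := fun m hm => by
      simp [Q, Finset.mem_compl.1 hm, ne_of_mem_of_not_mem hg (Finset.mem_compl.1 hm) |>.symm]
    have hQg : Q g = P g + δ := by simp [Q]
    have hcompl : ∑ m ∈ Gᶜ, f m * (Q m - P m) = -∑ m ∈ Gᶜ, f m * P m := by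
      rw [← Finset.sum_neg_distrib]
      exact Finset.sum_congr rfl fun m hm => by rw [hQc m hm]; ring
    have hincr := hmono g hg (Set.mem_Ici.2 (hPnn g)) (Set.mem_Ici.2 (by linarith [hPnn g]))
      (lt_add_of_pos_right (P g) hδ)
    have hchange := hP.rate_change_nonpos (Finset.notMem_compl.2 hg) hQ
      (fun m => by simp only [Q]; split_ifs <;> linarith [hPnn m, hPnn g])
      (by rw [hcompl, hQg, add_sub_cancel_left]; linarith [hP.1.2])
    rw [Finset.sum_eq_zero fun m hm => by
      rw [hQc m hm, max_eq_left (hbad m (Finset.mem_compl.1 hm) 0 le_rfl),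
        max_eq_left (hbad m (Finset.mem_compl.1 hm) _ (hPnn m)), sub_self, mul_zero], hQg,
      max_eq_right hrg.le, max_eq_right (hrg.trans hincr).le] at hchange
    linarith [mul_pos (hf g) (sub_pos.2 hincr)]
  have hc : ∑ m ∈ Gᶜ, f m * P m = 0 :=
    le_antisymm (by linarith [hP.1.2]) (Finset.sum_nonneg hterm)
  refine ⟨fun m hm => ?_, by linarith [hP.1.2]⟩
  have := (Finset.sum_eq_zero_iff_of_nonneg hterm).1 hc m (Finset.mem_compl.2 hm)
  exact (mul_eq_zero.1 this).resolve_left (hf m).ne'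

theorem IsOptimal.sum_excess_le (hf : ∀ m, 0 < f m) (hP : IsOptimal f r B P) {T : Finset ι}
    {P0 : ι → ℝ} {κ : ℝ} (hκ : 0 < κ) (hT : ∀ m ∈ T, 0 ≤ P0 m ∧ P0 m < P m)
    (hslow : ∀ m ∈ T, ∀ p q, P0 m < p → p < q → r m q - r m p < κ * (q - p))
    {g : ι} (hgT : g ∉ T) (hPg : P g = 0) {y : ℝ} (hy : 0 < y) (hgain : κ * y ≤ r g y)
    (hzero : r g 0 ≤ 0) : ∑ m ∈ T, f m * (P m - P0 m) ≤ f g * y := by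
  set S := ∑ m ∈ T, f m * (P m - P0 m)
  by_contra! hS
  -- otherwise the fraction `θ` of the excess of `T` over the thresholds can give `g` the power `y`
  have hSpos : 0 < S := (mul_pos (hf g) hy).trans hS
  set θ := f g * y / S
  have hθ : 0 < θ := div_pos (mul_pos (hf g) hy) hSpos
  have hθ1 : θ < 1 := (div_lt_one hSpos).2 hS
  have hθS : θ * S = f g * y := div_mul_cancel₀ _ hSpos.ne'
  set Q : ι → ℝ := fun m =>
    if m = g then y else if m ∈ T then P m - θ * (P m - P0 m) else P m
  have hQ : ∀ m, m ≠ g → m ∉ T → Q m = P m := fun m hmg hmT => by simp [Q, hmg, hmT]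
  have hQT : ∀ m ∈ T, Q m = P m - θ * (P m - P0 m) := fun m hm => by
    simp [Q, ne_of_mem_of_not_mem hm hgT, hm]
  have hQg : Q g = y := by simp [Q]
  have hQnn : ∀ m, 0 ≤ Q m := fun m => by
    by_cases hm : m ∈ T
    · rw [hQT m hm]; nlinarith [hT m hm]
    · simp only [Q, hm, ↓reduceIte]; split_ifs <;> linarith [hP.1.1 m, hy]
  have hTsum : ∑ m ∈ T, f m * (Q m - P m) = -(θ * S) := by
    rw [Finset.mul_sum, ← Finset.sum_neg_distrib]
    exact Finset.sum_congr rfl fun m hm => by rw [hQT m hm]; ring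
  have hchange := hP.rate_change_nonpos hgT hQ hQnn
    (by rw [hTsum, hQg, hPg, sub_zero]; linarith [hP.1.2])
  -- each channel of `T` loses less than `κ` per unit of power removed
  have hloss : ∀ m ∈ T, -(κ * θ * (f m * (P m - P0 m))) <
      f m * (max 0 (r m (Q m)) - max 0 (r m (P m))) := fun m hm => by
    have hPQ : P m - Q m = θ * (P m - P0 m) := by rw [hQT m hm]; ring
    have hslope := hslow m hm (Q m) (P m) (by rw [hQT m hm]; nlinarith [hT m hm])
      (by rw [hQT m hm]; nlinarith [hT m hm])
    rw [hPQ] at hslope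
    have := max_zero_sub_max_zero_lt hslope (by have := sub_pos.2 (hT m hm).2; positivity)
    nlinarith [hf m]
  have hsum := Finset.sum_lt_sum_of_nonempty (Finset.nonempty_of_sum_ne_zero hSpos.ne') hloss
  rw [Finset.sum_neg_distrib, ← Finset.mul_sum, mul_assoc, hθS] at hsum
  rw [hQg, hPg, max_eq_left hzero, sub_zero] at hchange
  nlinarith [le_max_right 0 (r g y), hf g]

theorem IsOptimal.pos_of_threshold (hf : ∀ m, 0 < f m) (hP : IsOptimal f r B P)
    {G : Finset ι} {P0 : ι → ℝ} {κ : ℝ} (hκ : 0 < κ) (hP0 : ∀ m ∈ G, 0 ≤ P0 m)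
    (hslow : ∀ m ∈ G, ∀ p q, P0 m < p → p < q → r m q - r m p < κ * (q - p))
    (hbudget : ∑ m ∈ G, f m * P0 m < ∑ m ∈ G, f m * P m)
    {g : ι} (hg : g ∈ G) {y : ℝ} (hy : 0 < y) (hyP0 : y ≤ P0 g) (hgain : κ * y ≤ r g y)
    (hzero : r g 0 ≤ 0) : 0 < P g := by
  refine (hP.1.1 g).lt_of_ne fun hPg => ?_
  set T := (G.erase g).filter fun m => P0 m < P m
  have hT : ∀ m ∈ T, m ≠ g ∧ m ∈ G ∧ P0 m < P m := fun m hm => by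
    simpa only [T, Finset.mem_filter, Finset.mem_erase, and_assoc] using hm
  have hexcess := hP.sum_excess_le hf hκ (fun m hm => ⟨hP0 m (hT m hm).2.1, (hT m hm).2.2⟩)
    (fun m hm => hslow m (hT m hm).2.1) (fun hgT => (hT g hgT).1 rfl) hPg.symm hy hgain hzero
  have := lt_sum_erase_filter_lt hg (fun m _ => (hf m).le) hbudget
  rw [← hPg, sub_zero] at this
  nlinarith [hf g]

end Allocation

theorem stmt6_general {L M : ℕ}
    (a : Fin L → ℝ)
    (ha2 : 2 ≤ nsq a)
    (h : Fin M → Fin L → ℝ)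
    (f : Fin M → ℝ) (hf : ∀ m, 0 < f m)
    (Pbar : ℝ)
    -- the good set G
    (G : Finset (Fin M)) (hG : G = Finset.univ.filter (fun m => eps a (h m) < nsq (h m)))
    (hGne : G.Nonempty)
    -- for each m ∈ G, x m is the unique positive solution of R(x) = x·R'(x)
    (x : Fin M → ℝ)
    (hx : ∀ m ∈ G, 0 < x m ∧
      Rsym a (h m) (x m) = x m * deriv (Rsym a (h m)) (x m))
    -- for each m ∈ G, lam m is the unique value with P^KKT_{h_m}(lam m) = x m
    (lam : Fin M → ℝ)
    (hlam : ∀ m ∈ G, 0 < lam m ∧ PKKT a (h m) (lam m) = x m)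
    -- λ₀ and P̄₀
    (lam0 : ℝ) (hlam0 : lam0 = G.inf' hGne lam)
    (Pbar0 : ℝ) (hPbar0 : Pbar0 = ∑ m ∈ G, f m * PKKT a (h m) lam0)
    (hPbig : Pbar0 < Pbar)
    -- an optimal solution of DP1^(s)
    (Pstar : Fin M → ℝ)
    (hfeas : (∀ m, 0 ≤ Pstar m) ∧ ∑ m, f m * Pstar m ≤ Pbar)
    (hopt : ∀ Q : Fin M → ℝ, (∀ m, 0 ≤ Q m) → ∑ m, f m * Q m ≤ Pbar →
      ∑ m, f m * max 0 (Rsym a (h m) (Q m)) ≤ ∑ m, f m * max 0 (Rsym a (h m) (Pstar m))) :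
    ∀ m, 0 < Pstar m ↔ m ∈ G := by
  have hA : 0 < nsq a := by linarith
  have hgood : ∀ m ∈ G, 0 < nsq (h m) ∧ eps a (h m) < nsq (h m) * nsq a := fun m hm => by
    have hm : eps a (h m) < nsq (h m) := by simpa [hG] using hm
    have := eps_nonneg (a := a) (h := h m)
    constructor <;> nlinarith
  have hlam0le : ∀ m ∈ G, lam0 ≤ lam m := fun m hm => hlam0 ▸ Finset.inf'_le lam hm
  have hlam0pos : 0 < lam0 := hlam0 ▸ (Finset.lt_inf'_iff hGne).2 fun m hm => (hlam m hm).1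
  have hxP0 : ∀ m ∈ G, x m ≤ PKKT a (h m) lam0 := fun m hm =>
    (hlam m hm).2 ▸ PKKT_antitoneOn hlam0pos (hlam m hm).1 (hlam0le m hm)
  have hP0pos : ∀ m ∈ G, 0 < PKKT a (h m) lam0 := fun m hm => (hx m hm).1.trans_le (hxP0 m hm)
  have hgain : ∀ m ∈ G, lam0 / (2 * Real.log 2) * x m ≤ Rsym a (h m) (x m) := fun m hm => by
    obtain ⟨hlpos, hPx⟩ := hlam m hm
    rw [(hx m hm).2, ← hPx, deriv_Rsym_PKKT hA (hgood m hm).1 hlpos (hPx ▸ (hx m hm).1),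
      mul_comm]
    gcongr
    exacts [hPx ▸ (hx m hm).1.le, hlam0le m hm]
  have hP : IsOptimal f (fun m => Rsym a (h m)) Pbar Pstar :=
    ⟨hfeas, fun Q hQ => hopt Q hQ.1 hQ.2⟩
  obtain ⟨g₀, hg₀⟩ := id hGne
  have hx₀ : f g₀ * x g₀ ≤ Pbar := calc
    f g₀ * x g₀ ≤ f g₀ * PKKT a (h g₀) lam0 :=
      mul_le_mul_of_nonneg_left (hxP0 g₀ hg₀) (hf g₀).le
    _ ≤ Pbar0 :=
      hPbar0 ▸ Finset.single_le_sum (fun m hm => (mul_pos (hf m) (hP0pos m hm)).le) hg₀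
    _ ≤ Pbar := hPbig.le
  obtain ⟨g, hg⟩ := hP.exists_rate_pos hf (hx g₀ hg₀).1.le hx₀
    ((mul_pos (by positivity) (hx g₀ hg₀).1).trans_le (hgain g₀ hg₀))
  obtain ⟨hoff, hbudget⟩ := hP.budget_eq hf
    (fun m hm p hp => (Rsym_neg (by linarith) (by simpa [hG] using hm) hp).le)
    (fun m hm => Rsym_strictMonoOn hA (hgood m hm).2) hg
  refine fun m => ⟨fun hm => by_contra fun hmG => hm.ne' (hoff m hmG), fun hm => ?_⟩
  exact hP.pos_of_threshold hf (by positivity) (fun m hm => (hP0pos m hm).le)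
    (fun m hm p q => Rsym_sub_lt_of_PKKT_lt hA (hgood m hm).2 hlam0pos (hP0pos m hm))
    (hbudget ▸ hPbar0 ▸ hPbig) hm (hx m hm).1 (hxP0 m hm) (hgain m hm)
    (Rsym_zero_neg (by linarith)).le

/-- Theorem 2: above the power threshold P̄₀, every optimal solution of
DP1^(s) has active set exactly equal to the good set G. -/
theorem stmt6 {L M : ℕ} (hL : 1 ≤ L)
    (a : Fin L → ℝ) (ha : a ≠ 0) (haint : ∀ i, ∃ n : ℤ, a i = (n : ℝ))
    (ha2 : 2 ≤ nsq a)
    (h : Fin M → Fin L → ℝ) (hh : ∀ m, h m ≠ 0)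
    (f : Fin M → ℝ) (hf : ∀ m, 0 < f m) (hfsum : ∑ m, f m = 1)
    (Pbar : ℝ) (hPbar : 0 < Pbar)
    -- the good set G
    (G : Finset (Fin M)) (hG : G = Finset.univ.filter (fun m => eps a (h m) < nsq (h m)))
    (hGne : G.Nonempty)
    -- for each m ∈ G, x m is the unique positive solution of R(x) = x·R'(x)
    (x : Fin M → ℝ)
    (hx : ∀ m ∈ G, 0 < x m ∧
      Rsym a (h m) (x m) = x m * deriv (Rsym a (h m)) (x m))
    (hxuniq : ∀ m ∈ G, ∀ y : ℝ, 0 < y →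
      Rsym a (h m) y = y * deriv (Rsym a (h m)) y → y = x m)
    -- for each m ∈ G, lam m is the unique value with P^KKT_{h_m}(lam m) = x m
    (lam : Fin M → ℝ)
    (hlam : ∀ m ∈ G, 0 < lam m ∧ PKKT a (h m) (lam m) = x m)
    (hlamuniq : ∀ m ∈ G, ∀ μ : ℝ, 0 < μ → PKKT a (h m) μ = x m → μ = lam m)
    -- λ₀ and P̄₀
    (lam0 : ℝ) (hlam0 : lam0 = G.inf' hGne lam)
    (Pbar0 : ℝ) (hPbar0 : Pbar0 = ∑ m ∈ G, f m * PKKT a (h m) lam0)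
    (hPbig : Pbar0 < Pbar)
    -- an optimal solution of DP1^(s)
    (Pstar : Fin M → ℝ)
    (hfeas : (∀ m, 0 ≤ Pstar m) ∧ ∑ m, f m * Pstar m ≤ Pbar)
    (hopt : ∀ Q : Fin M → ℝ, (∀ m, 0 ≤ Q m) → ∑ m, f m * Q m ≤ Pbar →
      ∑ m, f m * max 0 (Rsym a (h m) (Q m)) ≤ ∑ m, f m * max 0 (Rsym a (h m) (Pstar m))) :
    ∀ m, 0 < Pstar m ↔ m ∈ G :=
  stmt6_general a ha2 h f hf Pbar G hG hGne x hx lam hlam lam0 hlam0 Pbar0 hPbar0 hPbig Pstar hfeas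
    hopt
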